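/- Let X₀ ⊂ (−1/2, 1/2) be finite with min(X₀) + max(X₀) = 0, and X ⊂ Z finite. Then the Minkowski sums X₀ ⊕ X and (−X₀) ⊕ X are homometric subsets of ℝ: the multisets of pairwise distances coincide. -/

import Mathlib

open Finset

/-- The multiset of pairwise distances over pairs `x < y` of a finite subset
of `ℝ`. -/
noncomputable def distMultiset (S : Finset ℝ) : Multiset ℝ :=
  ((S ×ˢ S).filter fun p => p.1 < p.2).val.map fun p => p.2 - p.1

/-- The Minkowski sum `X₀ ⊕ X` of a finite set of reals and a finite set of
integers. -/
noncomputable def minkSum (X₀ : Finset ℝ) (X : Finset ℤ) : Finset ℝ :=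
  (X₀ ×ˢ X).image fun p => p.1 + (p.2 : ℝ)

/-!
Since `X₀ ⊂ (−1/2, 1/2)`, every point `a + m` of `X₀ ⊕ X` determines its cluster centre
`m = round (a + m)`. For a pair `a + m < b + n`, the reflection `x ↦ −x + m + n` swaps the
two clusters and sends the pair to `−b + m < −a + n`, a pair of `(−X₀) ⊕ X` with the same
distance. Doing the same from `(−X₀) ⊕ X` undoes it, so this is a bijection between the
ordered pairs of the two sets preserving distances.
-/

noncomputable def ascPairs (S : Finset ℝ) : Finset (ℝ × ℝ) :=
  (S ×ˢ S).filter fun p => p.1 < p.2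

theorem mem_ascPairs {S : Finset ℝ} {p : ℝ × ℝ} :
    p ∈ ascPairs S ↔ p.1 ∈ S ∧ p.2 ∈ S ∧ p.1 < p.2 := by
  simp only [ascPairs, mem_filter, mem_product, and_assoc]

theorem distMultiset_eq_of_involution {S T : Finset ℝ} (E : ℝ × ℝ → ℝ × ℝ)
    (hST : ∀ p ∈ ascPairs S, E p ∈ ascPairs T ∧ E (E p) = p)
    (hTS : ∀ q ∈ ascPairs T, E q ∈ ascPairs S ∧ E (E q) = q)
    (hgap : ∀ p, (E p).2 - (E p).1 = p.2 - p.1) :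
    distMultiset S = distMultiset T :=
  Multiset.map_eq_map_of_bij_of_nodup _ _ (ascPairs S).nodup (ascPairs T).nodup
    (fun p _ => E p) (fun p hp => (hST p hp).1)
    (fun p hp p' hp' h => by rw [← (hST p hp).2, ← (hST p' hp').2, h])
    (fun q hq => ⟨E q, (hTS q hq).1, (hTS q hq).2⟩) (fun p _ => (hgap p).symm)

theorem mem_minkSum {X₀ : Finset ℝ} {X : Finset ℤ} {x : ℝ} :
    x ∈ minkSum X₀ X ↔ ∃ a ∈ X₀, ∃ m ∈ X, a + (m : ℝ) = x := by
  simp only [minkSum, mem_image, mem_product, Prod.exists, and_assoc]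
  exact ⟨fun ⟨a, m, ha, hm, h⟩ => ⟨a, ha, m, hm, h⟩,
    fun ⟨a, ha, m, hm, h⟩ => ⟨a, m, ha, hm, h⟩⟩

theorem neg_mem_Ioo_half {a : ℝ} (ha : -(1 / 2 : ℝ) < a ∧ a < 1 / 2) :
    -(1 / 2 : ℝ) < -a ∧ -a < 1 / 2 :=
  ⟨by linarith [ha.2], by linarith [ha.1]⟩

theorem round_add_intCast_of_mem_Ioo {a : ℝ} (ha : -(1 / 2 : ℝ) < a ∧ a < 1 / 2) (m : ℤ) :
    round (a + m) = m := by
  rw [round_add_intCast, round_eq_zero_iff.2 ⟨ha.1.le, ha.2⟩, zero_add]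

noncomputable def clusterReflect (p : ℝ × ℝ) : ℝ × ℝ :=
  ((round p.1 + round p.2 : ℤ) - p.2, (round p.1 + round p.2 : ℤ) - p.1)

theorem clusterReflect_sub (p : ℝ × ℝ) :
    (clusterReflect p).2 - (clusterReflect p).1 = p.2 - p.1 := by
  simp only [clusterReflect]
  ring

theorem clusterReflect_add_intCast {a b : ℝ} (ha : -(1 / 2 : ℝ) < a ∧ a < 1 / 2)
    (hb : -(1 / 2 : ℝ) < b ∧ b < 1 / 2) (m n : ℤ) :
    clusterReflect (a + m, b + n) = (-b + m, -a + n) := by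
  simp only [clusterReflect, round_add_intCast_of_mem_Ioo ha, round_add_intCast_of_mem_Ioo hb,
    Int.cast_add, Prod.mk.injEq]
  constructor <;> ring

theorem clusterReflect_mem_ascPairs {X₀ : Finset ℝ} {X : Finset ℤ}
    (hball : ∀ a ∈ X₀, -(1 / 2 : ℝ) < a ∧ a < 1 / 2) {p : ℝ × ℝ}
    (hp : p ∈ ascPairs (minkSum X₀ X)) :
    clusterReflect p ∈ ascPairs (minkSum (X₀.image fun a => -a) X) ∧
      clusterReflect (clusterReflect p) = p := by
  obtain ⟨x, y⟩ := p
  obtain ⟨hx, hy, hlt⟩ := mem_ascPairs.1 hp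
  obtain ⟨a, ha, m, hm, rfl⟩ := mem_minkSum.1 hx
  obtain ⟨b, hb, n, hn, rfl⟩ := mem_minkSum.1 hy
  rw [clusterReflect_add_intCast (hball a ha) (hball b hb),
    clusterReflect_add_intCast (neg_mem_Ioo_half (hball b hb)) (neg_mem_Ioo_half (hball a ha)),
    neg_neg, neg_neg]
  refine ⟨mem_ascPairs.2 ⟨?_, ?_, by dsimp only at hlt ⊢; linarith⟩, rfl⟩
  · exact mem_minkSum.2 ⟨-b, mem_image_of_mem _ hb, m, hm, rfl⟩
  · exact mem_minkSum.2 ⟨-a, mem_image_of_mem _ ha, n, hn, rfl⟩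

theorem minkowski_sums_homometric_general (X₀ : Finset ℝ) (X : Finset ℤ)
    (hball : ∀ a ∈ X₀, -(1 / 2 : ℝ) < a ∧ a < 1 / 2) :
    distMultiset (minkSum X₀ X) = distMultiset (minkSum (X₀.image (fun a => -a)) X) := by
  have hball_neg : ∀ a ∈ X₀.image (fun a => -a), -(1 / 2 : ℝ) < a ∧ a < 1 / 2 := by
    simp only [mem_image, forall_exists_index, and_imp, forall_apply_eq_imp_iff₂]
    exact fun a ha => neg_mem_Ioo_half (hball a ha)
  have hneg_neg : (X₀.image fun a => -a).image (fun a => -a) = X₀ := by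
    simp [image_image]
  refine distMultiset_eq_of_involution clusterReflect (fun p => clusterReflect_mem_ascPairs hball)
    (fun q hq => ?_) clusterReflect_sub
  simpa only [hneg_neg] using clusterReflect_mem_ascPairs hball_neg hq

/-- If `X₀ ⊂ (−1/2, 1/2)` satisfies `min X₀ + max X₀ = 0` and `X ⊂ ℤ`, then the
Minkowski sums `X₀ ⊕ X` and `(−X₀) ⊕ X` are homometric. -/
theorem minkowski_sums_homometric (X₀ : Finset ℝ) (X : Finset ℤ)
    (h₀ : X₀.Nonempty)
    (hball : ∀ a ∈ X₀, -(1 / 2 : ℝ) < a ∧ a < 1 / 2)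
    (hsym : X₀.min' h₀ + X₀.max' h₀ = 0) :
    distMultiset (minkSum X₀ X) = distMultiset (minkSum (X₀.image (fun a => -a)) X) :=
  minkowski_sums_homometric_general X₀ X hball
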